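/- Let α > 1 and 0 < η < 1, and set γ = 1/(2^α − 2) + (η/(1−η))·(1 + 1/(2^α − 2)). For any two vertices x, y ∈ V with x →^{𝒮η} y (i.e. y lies on the outer boundary of the η-stabiliser of x), one has η·r(𝒞_x)^α ≤ d(x,y) ≤ 1 + γ·r(𝒞_x)^α. -/

import Mathlib

open scoped ENNReal NNReal
open MeasureTheory

namespace CMPPaper

variable {V : Type*}

/-- Graph distance between two subsets of vertices, valued in `ℝ≥0∞`
(`⊤` when one of the sets is empty). -/
noncomputable def setDist (G : SimpleGraph V) (A B : Set V) : ℝ≥0∞ :=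
  ⨅ (x : A) (y : B), (G.dist x.1 y.1 : ℝ≥0∞)

/-- Total weight `r(A) = Σ_{x ∈ A} r(x) ∈ [0,∞]` of a set of vertices. -/
noncomputable def wt (r : V → ℝ≥0) (A : Set V) : ℝ≥0∞ :=
  ∑' x : A, (r x.1 : ℝ≥0∞)

/-- A partition (encoded as a setoid) of the vertex set is `(r,α)`-admissible if any two
distinct clusters `C ≠ C'` satisfy `d(C,C') > min(r(C), r(C'))^α`. -/
def Admissible (G : SimpleGraph V) (r : V → ℝ≥0) (α : ℝ) (s : Setoid V) : Prop :=
  ∀ C ∈ s.classes, ∀ C' ∈ s.classes, C ≠ C' →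
    (min (wt r C) (wt r C')) ^ α < setDist G C C'

/-- The cumulatively merged partition: the finest `(r,α)`-admissible partition, i.e. the
intersection (infimum as setoids) of all `(r,α)`-admissible partitions. -/
noncomputable def CMP (G : SimpleGraph V) (r : V → ℝ≥0) (α : ℝ) : Setoid V :=
  sInf {s : Setoid V | Admissible G r α s}

/-- The cluster of the CMP containing `x`. -/
def cluster (G : SimpleGraph V) (r : V → ℝ≥0) (α : ℝ) (x : V) : Set V :=
  {y | (CMP G r α) x y}

/-- The ball `B(A, l) = {z : d(z,A) ≤ l}` around a set of vertices. -/
def ballSet (G : SimpleGraph V) (A : Set V) (l : ℝ≥0∞) : Set V :=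
  {z | ∃ a ∈ A, (G.dist z a : ℝ≥0∞) ≤ l}

/-- A subset `H` of the vertices is stable if every cluster `C` of the CMP of the induced
subgraph on `H` (with the restricted weights) satisfies `B(C, r(C)^α) ⊆ H`. -/
def IsStable (G : SimpleGraph V) (r : V → ℝ≥0) (α : ℝ) (H : Set V) : Prop :=
  ∀ C ∈ (CMP (G.induce H) (fun x : H => r x) α).classes,
    ballSet G (Subtype.val '' C) ((wt (fun x : H => r x) C) ^ α) ⊆ H

/-- The stabiliser of `W`: the smallest stable set containing `W`, i.e. the intersection of
all stable sets containing `W`. -/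
def stabiliser (G : SimpleGraph V) (r : V → ℝ≥0) (α : ℝ) (W : Set V) : Set V :=
  ⋂₀ {H : Set V | IsStable G r α H ∧ W ⊆ H}

open Classical in
/-- The merging operator `M_{x,y}`: if the clusters of `x` and `y` are distinct and
`d(x,y) ≤ min(r(𝒞_x), r(𝒞_y))^α`, merge them (take the smallest coarsening of `s`
relating `x` and `y`); otherwise leave the partition unchanged. -/
noncomputable def mergeOp (G : SimpleGraph V) (r : V → ℝ≥0) (α : ℝ) (x y : V)
    (s : Setoid V) : Setoid V :=
  if ¬ s x y ∧ (G.dist x y : ℝ≥0∞) ≤ (min (wt r {u | s x u}) (wt r {u | s y u})) ^ α then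
    sInf {t : Setoid V | s ≤ t ∧ t x y}
  else s

/-- The relation `C ↦ C'` (`C'` descends from `C`) on clusters of the CMP. -/
def Descends (G : SimpleGraph V) (r : V → ℝ≥0) (α : ℝ) (C C' : Set V) : Prop :=
  C ∈ (CMP G r α).classes ∧ C' ∈ (CMP G r α).classes ∧ C ≠ C' ∧
    setDist G C C' ≤ (wt r C) ^ α

/-- Integer part of an extended nonnegative real, valued in `ℕ∞`. -/
noncomputable def efloor (x : ℝ≥0∞) : ℕ∞ :=
  if x = ⊤ then ⊤ else (⌊x.toReal⌋₊ : ℕ∞)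

/-- The bound `max(w log₂ w / 2, 0)` (for `α = 1`), resp. `w^α/(2^α-2)` (for `α ≠ 1`),
on the diameter of a cluster of total weight `w`. -/
noncomputable def diamBound (α : ℝ) (w : ℝ≥0∞) : ℝ≥0∞ :=
  if α = 1 then
    (if w = ⊤ then ⊤ else ENNReal.ofReal (max (w.toReal * Real.logb 2 w.toReal / 2) 0))
  else w ^ α / ((2 : ℝ≥0∞) ^ α - 2)

/-- The relation `C →η C'` on clusters of the CMP:  `d(C,C') ≤ η·r(C)^α`. -/
def EtaDesc (G : SimpleGraph V) (r : V → ℝ≥0) (α η : ℝ) (C C' : Set V) : Prop :=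
  C ∈ (CMP G r α).classes ∧ C' ∈ (CMP G r α).classes ∧ C ≠ C' ∧
    setDist G C C' ≤ ENNReal.ofReal η * (wt r C) ^ α

/-- The `η`-stabiliser of a vertex `x`: the union of `𝒞_x` together with all clusters
reachable from `𝒞_x` by a finite oriented path for the relation `→η`. -/
def etaStab (G : SimpleGraph V) (r : V → ℝ≥0) (α η : ℝ) (x : V) : Set V :=
  ⋃₀ {C' | Relation.ReflTransGen (EtaDesc G r α η) (cluster G r α x) C'}

/-- The path graph on `ℕ`: `m` and `m+1` are adjacent. -/
def pathGraphN : SimpleGraph ℕ := SimpleGraph.fromRel (fun m n => n = m + 1)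

/-- The two-sided path graph on `ℤ`: `k` and `k+1` are adjacent. -/
def pathGraphZ : SimpleGraph ℤ := SimpleGraph.fromRel (fun a b => b = a + 1)

/-- The hypercubic lattice `ℤ^d`: `x` and `y` are adjacent iff `‖x-y‖₁ = 1`. -/
def latticeGraph (d : ℕ) : SimpleGraph (Fin d → ℤ) :=
  SimpleGraph.fromRel (fun x y => (∑ i, |x i - y i|) = 1)

/-- The CMP of the weighted graph `(G, r)` with expansion exponent `α` has an
infinite cluster. -/
def HasInfiniteCluster (G : SimpleGraph V) (r : V → ℝ≥0) (α : ℝ) : Prop :=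
  ∃ C ∈ (CMP G r α).classes, C.Infinite

/-- `w` is an i.i.d. family of Bernoulli(`p`) weights indexed by `V`, under the
probability measure `μ`. -/
def IsBernoulliField {Ω : Type*} [MeasurableSpace Ω] (μ : Measure Ω)
    (p : ℝ) (w : Ω → V → ℝ≥0) : Prop :=
  (∀ x : V, Measurable fun ω => w ω x) ∧
  (∀ ω x, w ω x = 0 ∨ w ω x = 1) ∧
  (∀ x : V, μ {ω | w ω x = 1} = ENNReal.ofReal p) ∧
  ProbabilityTheory.iIndepFun (fun x ω => w ω x) μ

/-- `w` is an i.i.d. family of weights indexed by `V`, each with law `ν`, under the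
probability measure `μ`. -/
def IsIIDField {Ω : Type*} [MeasurableSpace Ω] (μ : Measure Ω)
    (ν : Measure ℝ≥0) (w : Ω → V → ℝ≥0) : Prop :=
  (∀ x : V, Measurable fun ω => w ω x) ∧
  (∀ x : V, μ.map (fun ω => w ω x) = ν) ∧
  ProbabilityTheory.iIndepFun (fun x ω => w ω x) μ

/-!
Two facts about the CMP drive both bounds. A step `C →η C'` forces `r(C')^α ≤ η r(C)^α`: were
`C` the lighter cluster, admissibility would give `d(C, C') > r(C)^α ≥ η r(C)^α`. And every
cluster `C` has diameter at most `κ r(C)^α`, `κ = 1/(2^α - 2)`: by Zorn there is a maximal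
refinement of the CMP with this diameter bound. Were it strictly finer than the CMP, it would
not be admissible, so two of its classes inside one CMP cluster would be close, and merging them
keeps the bound because `a^α + (2^α - 1) b^α ≤ (a + b)^α` for `0 ≤ b ≤ a`.

Along an `η`-path starting at `𝒞_x`, with `c = η(1 + κ)/(1 - η)` the potential
`d(x, z) + c r(C)^α` (for `z ∈ C`) can only decrease from one cluster to the next, so
`d(x, 𝒮^η_x) ≤ (κ + c) r(𝒞_x)^α = γ r(𝒞_x)^α`. Conversely, a vertex within `η r(𝒞_x)^α` of `x`
already belongs to `𝒮^η_x`, hence is not a neighbour of it.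
-/

theorem _root_.ConvexOn.map_add_sub_map_le {𝕜 : Type*} [Field 𝕜] [LinearOrder 𝕜]
    [IsStrictOrderedRing 𝕜] {s : Set 𝕜} {f : 𝕜 → 𝕜} (hf : ConvexOn 𝕜 s f) {x y d : 𝕜}
    (hx : x ∈ s) (hyd : y + d ∈ s) (hxy : x ≤ y) (hd : 0 < d) :
    f (x + d) - f x ≤ f (y + d) - f y := by
  have hIcc : Set.Icc x (y + d) ⊆ s := hf.1.ordConnected.out hx hyd
  have hxd : x + d ∈ s := hIcc ⟨by linarith, by linarith⟩
  have hy : y ∈ s := hIcc ⟨hxy, by linarith⟩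
  have h₁ := hf.secant_mono hx hxd hyd (by linarith) (by linarith) (by linarith : x + d ≤ y + d)
  have h₂ := hf.secant_mono hyd hx hy (by linarith) (by linarith) hxy
  rw [add_sub_cancel_left] at h₁
  rw [show y - (y + d) = -d by ring, div_neg, ← neg_div, neg_sub] at h₂
  rw [show (f x - f (y + d)) / (x - (y + d)) = (f (y + d) - f x) / (y + d - x) by
    rw [← neg_sub, ← neg_sub (y + d), neg_div_neg_eq]] at h₂
  exact (div_le_div_iff_of_pos_right hd).1 (h₁.trans h₂)

theorem rpow_add_rpow_le {α a b : ℝ} (hα : 1 ≤ α) (hb : 0 ≤ b) (hba : b ≤ a) :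
    a ^ α + (2 ^ α - 1) * b ^ α ≤ (a + b) ^ α := by
  rcases hb.eq_or_lt with rfl | hb
  · simp [Real.zero_rpow (by linarith : α ≠ 0)]
  have h := (convexOn_rpow hα).map_add_sub_map_le hb.le (by simp; linarith) hba hb
  rw [← two_mul, Real.mul_rpow zero_le_two hb.le] at h
  linarith

theorem two_rpow_sub_two_pos {α : ℝ} (hα : 1 < α) : 0 < (2 : ℝ) ^ α - 2 := by
  have := Real.rpow_lt_rpow_of_exponent_lt one_lt_two hα
  rw [Real.rpow_one] at this
  linarith

theorem rpow_mul_add_rpow_le {α a b : ℝ} (hα : 1 < α) (hb : 0 ≤ b) (hba : b ≤ a) :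
    a ^ α * (1 / (2 ^ α - 2)) + b ^ α + b ^ α * (1 / (2 ^ α - 2)) ≤
      (a + b) ^ α * (1 / (2 ^ α - 2)) := by
  have h2 := two_rpow_sub_two_pos hα
  have key := rpow_add_rpow_le hα.le hb hba
  rw [← div_le_div_iff_of_pos_right h2] at key
  field_simp
  field_simp at key
  linarith

theorem rpow_mul_add_min_rpow_le {α : ℝ} (hα : 1 < α) (a b : ℝ≥0∞) :
    a ^ α * ENNReal.ofReal (1 / (2 ^ α - 2)) + min a b ^ α +
        b ^ α * ENNReal.ofReal (1 / (2 ^ α - 2)) ≤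
      (a + b) ^ α * ENNReal.ofReal (1 / (2 ^ α - 2)) := by
  wlog hba : b ≤ a generalizing a b
  · calc _ = b ^ α * ENNReal.ofReal (1 / (2 ^ α - 2)) + min b a ^ α +
          a ^ α * ENNReal.ofReal (1 / (2 ^ α - 2)) := by rw [min_comm]; ring
      _ ≤ (b + a) ^ α * ENNReal.ofReal (1 / (2 ^ α - 2)) := this b a (le_of_not_ge hba)
      _ = _ := by rw [add_comm]
  have hk : 0 < 1 / ((2 : ℝ) ^ α - 2) := one_div_pos.2 (two_rpow_sub_two_pos hα)
  rcases eq_or_ne a ⊤ with rfl | ha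
  · rw [top_add, ENNReal.top_rpow_of_pos (by linarith),
      ENNReal.top_mul (ENNReal.ofReal_pos.2 hk).ne']
    exact le_top
  lift a to ℝ≥0 using ha
  lift b to ℝ≥0 using ne_top_of_le_ne_top ENNReal.coe_ne_top hba
  rw [min_eq_right hba, ← ENNReal.coe_add, ENNReal.ofReal]
  simp only [← ENNReal.coe_rpow_of_nonneg _ (by linarith : 0 ≤ α)]
  norm_cast
  rw [← NNReal.coe_le_coe]
  push_cast
  rw [Real.coe_toNNReal _ hk.le]
  exact rpow_mul_add_rpow_le hα b.2 (by exact_mod_cast hba)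

theorem ofReal_mul_one_add_add_eq {η : ℝ} (hη0 : 0 ≤ η) (hη1 : η < 1) {d : ℝ} (hd : 0 ≤ d) :
    ENNReal.ofReal η * (1 + ENNReal.ofReal d + ENNReal.ofReal (η / (1 - η) * (1 + d))) =
      ENNReal.ofReal (η / (1 - η) * (1 + d)) := by
  have h1η : 0 < 1 - η := by linarith
  rw [← ENNReal.ofReal_one, ← ENNReal.ofReal_add zero_le_one hd,
    ← ENNReal.ofReal_add (by positivity) (by positivity), ← ENNReal.ofReal_mul hη0]
  congr 1
  field_simp
  ring

section SetDist

variable (G : SimpleGraph V)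

theorem setDist_le_dist {A B : Set V} {a b : V} (ha : a ∈ A) (hb : b ∈ B) :
    setDist G A B ≤ G.dist a b :=
  (iInf_le _ (⟨a, ha⟩ : A)).trans (iInf_le _ (⟨b, hb⟩ : B))

theorem setDist_anti {A A' B B' : Set V} (hA : A ⊆ A') (hB : B ⊆ B') :
    setDist G A' B' ≤ setDist G A B :=
  le_iInf₂ fun a b => setDist_le_dist G (hA a.2) (hB b.2)

theorem exists_dist_eq_setDist {A B : Set V} (hA : A.Nonempty) (hB : B.Nonempty) :
    ∃ a ∈ A, ∃ b ∈ B, (G.dist a b : ℝ≥0∞) = setDist G A B := by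
  obtain ⟨a₀, ha₀⟩ := hA
  obtain ⟨b₀, hb₀⟩ := hB
  set p := Function.argminOn (fun p : V × V => G.dist p.1 p.2) (A ×ˢ B) ⟨(a₀, b₀), ha₀, hb₀⟩
  obtain ⟨ha, hb⟩ : p ∈ A ×ˢ B := Function.argminOn_mem _ _ _
  refine ⟨p.1, ha, p.2, hb, le_antisymm ?_ (setDist_le_dist G ha hb)⟩
  exact le_iInf₂ fun a b => by
    exact_mod_cast
      Function.argminOn_le (fun p : V × V => G.dist p.1 p.2) _ (Set.mk_mem_prod a.2 b.2)

theorem dist_le_dist_add_dist (hG : G.Connected) (u v w : V) :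
    (G.dist u w : ℝ≥0∞) ≤ G.dist u v + G.dist v w := by
  exact_mod_cast hG.dist_triangle

theorem exists_dist_le_add_setDist_add (hG : G.Connected) {A B : Set V} {D : ℝ≥0∞}
    (hA : A.Nonempty) (hB : B.Nonempty) (hBD : ∀ u ∈ B, ∀ v ∈ B, (G.dist u v : ℝ≥0∞) ≤ D)
    (x : V) : ∃ p ∈ A, ∀ v ∈ B, (G.dist x v : ℝ≥0∞) ≤ G.dist x p + setDist G A B + D := by
  obtain ⟨p, hp, q, hq, hpq⟩ := exists_dist_eq_setDist G hA hB
  refine ⟨p, hp, fun v hv => ?_⟩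
  calc (G.dist x v : ℝ≥0∞) ≤ G.dist x p + G.dist p q + G.dist q v :=
        (dist_le_dist_add_dist G hG x q v).trans
          (add_le_add_left (dist_le_dist_add_dist G hG x p q) _)
    _ ≤ G.dist x p + setDist G A B + D := by rw [hpq]; exact add_le_add_right (hBD q hq v hv) _

end SetDist

section Weight

variable (r : V → ℝ≥0)

theorem wt_mono {A B : Set V} (h : A ⊆ B) : wt r A ≤ wt r B :=
  ENNReal.tsum_mono_subtype (fun x => (r x : ℝ≥0∞)) h

theorem wt_rpow_mono {α : ℝ} (hα : 0 ≤ α) {A B : Set V} (h : A ⊆ B) :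
    wt r A ^ α ≤ wt r B ^ α :=
  ENNReal.rpow_le_rpow (wt_mono r h) hα

theorem wt_union {A B : Set V} (h : Disjoint A B) : wt r (A ∪ B) = wt r A + wt r B :=
  ENNReal.summable.tsum_union_disjoint (f := fun x => (r x : ℝ≥0∞)) h ENNReal.summable

end Weight

theorem setOf_rel_eq_iff {s : Setoid V} {u v : V} : {w | s w u} = {w | s w v} ↔ s u v :=
  ⟨fun h => (h ▸ s.refl' u : u ∈ {w | s w v}),
    fun h => Set.ext fun _ => ⟨fun hw => s.trans' hw h, fun hw => s.trans' hw (s.symm' h)⟩⟩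

theorem exists_rel_of_sSup_rel {c : Set (Setoid V)} (hc : IsChain (· ≤ ·) c) (hne : c.Nonempty)
    {u v : V} (h : sSup c u v) : ∃ t ∈ c, t u v := by
  rw [Setoid.sSup_eq_eqvGen] at h
  change Relation.EqvGen _ u v at h
  induction h with
  | rel _ _ h => exact h
  | refl x => exact hne.imp fun t ht => ⟨ht, t.refl' x⟩
  | symm _ _ _ ih => obtain ⟨t, ht, h⟩ := ih; exact ⟨t, ht, t.symm' h⟩
  | trans _ _ _ _ _ ih₁ ih₂ =>
    obtain ⟨t₁, ht₁, h₁⟩ := ih₁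
    obtain ⟨t₂, ht₂, h₂⟩ := ih₂
    rcases hc.total ht₁ ht₂ with h | h
    · exact ⟨t₂, ht₂, t₂.trans' (h h₁) h₂⟩
    · exact ⟨t₁, ht₁, t₁.trans' h₁ (h h₂)⟩

/-- The partition that merges `U` into a single class and agrees with `m` outside `U`. -/
def collapse (m : Setoid V) (U : Set V) : Setoid V where
  r z w := (z ∈ U ↔ w ∈ U) ∧ (z ∉ U → m z w)
  iseqv :=
    { refl := fun z => ⟨Iff.rfl, fun _ => m.refl' z⟩
      symm := fun h => ⟨h.1.symm, fun hw => m.symm' (h.2 fun hz => hw (h.1.1 hz))⟩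
      trans := fun h₁ h₂ =>
        ⟨h₁.1.trans h₂.1, fun hz => m.trans' (h₁.2 hz) (h₂.2 fun hy => hz (h₁.1.2 hy))⟩ }

section Collapse

variable {m : Setoid V} {U : Set V}

theorem collapse_rel {z w : V} (hz : z ∈ U) (hw : w ∈ U) : collapse m U z w :=
  ⟨iff_of_true hz hw, fun h => absurd hz h⟩

theorem setOf_collapse_rel_of_mem {v : V} (hv : v ∈ U) : {w | collapse m U w v} = U :=
  Set.ext fun _ => ⟨fun h => h.1.2 hv, fun hw => collapse_rel hw hv⟩

theorem le_collapse (hU : ∀ ⦃z w⦄, m z w → z ∈ U → w ∈ U) : m ≤ collapse m U :=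
  fun _ _ h => ⟨⟨hU h, hU (m.symm' h)⟩, fun _ => h⟩

theorem collapse_le {P : Setoid V} (hmP : m ≤ P) (hUP : ∀ z ∈ U, ∀ w ∈ U, P z w) :
    collapse m U ≤ P := by
  intro z w h
  by_cases hz : z ∈ U
  · exact hUP z hz w (h.1.1 hz)
  · exact hmP (h.2 hz)

end Collapse

section Admissible

variable (G : SimpleGraph V) (r : V → ℝ≥0) {α : ℝ}

theorem admissible_iff {s : Setoid V} :
    Admissible G r α s ↔ ∀ u v, ¬ s u v →
      min (wt r {w | s w u}) (wt r {w | s w v}) ^ α < setDist G {w | s w u} {w | s w v} := by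
  constructor
  · exact fun h u v huv =>
      h _ (s.mem_classes u) _ (s.mem_classes v) (mt setOf_rel_eq_iff.1 huv)
  · rintro h _ ⟨u, rfl⟩ _ ⟨v, rfl⟩ hne
    exact h u v (mt setOf_rel_eq_iff.2 hne)

theorem rel_of_setDist_le (hα : 0 ≤ α) {s t : Setoid V} (hs : Admissible G r α s) (hts : t ≤ s)
    {u v : V}
    (h : setDist G {w | t w u} {w | t w v} ≤ min (wt r {w | t w u}) (wt r {w | t w v}) ^ α) :
    s u v := by
  by_contra huv
  have hsub : ∀ z, {w | t w z} ⊆ {w | s w z} := fun _ _ hw => hts hw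
  refine ((admissible_iff G r).1 hs u v huv).not_ge ?_
  calc setDist G {w | s w u} {w | s w v} ≤ setDist G {w | t w u} {w | t w v} :=
        setDist_anti G (hsub u) (hsub v)
    _ ≤ _ := h
    _ ≤ _ := ENNReal.rpow_le_rpow (min_le_min (wt_mono r (hsub u)) (wt_mono r (hsub v))) hα

theorem admissible_sInf (hα : 0 ≤ α) {S : Set (Setoid V)} (hS : ∀ s ∈ S, Admissible G r α s) :
    Admissible G r α (sInf S) :=
  (admissible_iff G r).2 fun _ _ huv => lt_of_not_ge fun h =>
    huv (Setoid.sInf_iff.2 fun s hs => rel_of_setDist_le G r hα (hS s hs) (sInf_le hs) h)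

theorem admissible_CMP (hα : 0 ≤ α) : Admissible G r α (CMP G r α) :=
  admissible_sInf G r hα fun _ hs => hs

theorem CMP_le {s : Setoid V} (hs : Admissible G r α s) : CMP G r α ≤ s :=
  sInf_le hs

theorem admissible_of_le (hα : 0 ≤ α) {s t : Setoid V} (ht : Admissible G r α t) (hst : s ≤ t)
    (hfar : ∀ u v, t u v → ¬ s u v →
      min (wt r {w | s w u}) (wt r {w | s w v}) ^ α < setDist G {w | s w u} {w | s w v}) :
    Admissible G r α s := by
  refine (admissible_iff G r).2 fun u v huv => ?_
  by_cases htuv : t u v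
  · exact hfar u v htuv huv
  · exact lt_of_not_ge fun h => htuv (rel_of_setDist_le G r hα ht hst h)

end Admissible

def DiamBounded (G : SimpleGraph V) (r : V → ℝ≥0) (α : ℝ) (κ : ℝ≥0∞) (t : Setoid V) : Prop :=
  ∀ ⦃u v⦄, t u v → (G.dist u v : ℝ≥0∞) ≤ wt r {w | t w v} ^ α * κ

section Diameter

variable {G : SimpleGraph V} {r : V → ℝ≥0} {α : ℝ} {κ : ℝ≥0∞}

theorem DiamBounded.dist_le {t : Setoid V} (h : DiamBounded G r α κ t) {E : Set V}
    (hE : E ∈ t.classes) {u v : V} (hu : u ∈ E) (hv : v ∈ E) :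
    (G.dist u v : ℝ≥0∞) ≤ wt r E ^ α * κ := by
  obtain ⟨z, rfl⟩ := hE
  have huv := h (t.trans' hu (t.symm' hv))
  rwa [setOf_rel_eq_iff.2 hv] at huv

theorem dist_le_of_mem_union (hG : G.Connected) (hα : 0 ≤ α)
    (hκ : ∀ a b : ℝ≥0∞, a ^ α * κ + min a b ^ α + b ^ α * κ ≤ (a + b) ^ α * κ)
    {A B : Set V} (hA : A.Nonempty) (hB : B.Nonempty) (hAB : Disjoint A B)
    (hdA : ∀ u ∈ A, ∀ v ∈ A, (G.dist u v : ℝ≥0∞) ≤ wt r A ^ α * κ)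
    (hdB : ∀ u ∈ B, ∀ v ∈ B, (G.dist u v : ℝ≥0∞) ≤ wt r B ^ α * κ)
    (hclose : setDist G A B ≤ min (wt r A) (wt r B) ^ α) {u v : V}
    (hu : u ∈ A ∪ B) (hv : v ∈ A ∪ B) : (G.dist u v : ℝ≥0∞) ≤ wt r (A ∪ B) ^ α * κ := by
  have hA_le : wt r A ^ α * κ ≤ wt r (A ∪ B) ^ α * κ :=
    mul_le_mul_left (wt_rpow_mono r hα Set.subset_union_left) κ
  have hB_le : wt r B ^ α * κ ≤ wt r (A ∪ B) ^ α * κ :=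
    mul_le_mul_left (wt_rpow_mono r hα Set.subset_union_right) κ
  have hcross : ∀ u ∈ A, ∀ v ∈ B, (G.dist u v : ℝ≥0∞) ≤ wt r (A ∪ B) ^ α * κ := by
    intro u hu v hv
    obtain ⟨p, hp, hpv⟩ := exists_dist_le_add_setDist_add G hG hA hB hdB u
    calc (G.dist u v : ℝ≥0∞) ≤ wt r A ^ α * κ + min (wt r A) (wt r B) ^ α + wt r B ^ α * κ :=
          (hpv v hv).trans (by gcongr; exact hdA u hu p hp)
      _ ≤ (wt r A + wt r B) ^ α * κ := hκ _ _
      _ = wt r (A ∪ B) ^ α * κ := by rw [wt_union r hAB]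
  rcases hu with hu | hu <;> rcases hv with hv | hv
  · exact (hdA u hu v hv).trans hA_le
  · exact hcross u hu v hv
  · rw [SimpleGraph.dist_comm]
    exact hcross v hv u hu
  · exact (hdB u hu v hv).trans hB_le

theorem mem_union_setOf_of_rel {m : Setoid V} {e e' z w : V} (hzw : m z w)
    (hz : z ∈ {u | m u e} ∪ {u | m u e'}) : w ∈ {u | m u e} ∪ {u | m u e'} :=
  hz.imp (m.trans' (m.symm' hzw)) (m.trans' (m.symm' hzw))

theorem DiamBounded.collapse (hG : G.Connected) (hα : 0 ≤ α)
    (hκ : ∀ a b : ℝ≥0∞, a ^ α * κ + min a b ^ α + b ^ α * κ ≤ (a + b) ^ α * κ)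
    {m : Setoid V} (hm : DiamBounded G r α κ m) {e e' : V} (hee' : ¬ m e e')
    (hclose : setDist G {w | m w e} {w | m w e'} ≤
      min (wt r {w | m w e}) (wt r {w | m w e'}) ^ α) :
    DiamBounded G r α κ (collapse m ({w | m w e} ∪ {w | m w e'})) := by
  intro u v huv
  by_cases hv : v ∈ {w | m w e} ∪ {w | m w e'}
  · rw [setOf_collapse_rel_of_mem hv]
    refine dist_le_of_mem_union (A := {w | m w e}) (B := {w | m w e'}) hG hα hκ
      ⟨e, m.refl' e⟩ ⟨e', m.refl' e'⟩ ?_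
      (fun _ hu _ hv => hm.dist_le (m.mem_classes e) hu hv)
      (fun _ hu _ hv => hm.dist_le (m.mem_classes e') hu hv) hclose (huv.1.2 hv) hv
    exact Set.disjoint_left.2 fun w hwe hwe' => hee' (m.trans' (m.symm' hwe) hwe')
  · have hmuv : m u v := huv.2 fun hu => hv (huv.1.1 hu)
    exact (hm hmuv).trans (mul_le_mul_left
      (wt_rpow_mono r hα fun _ hw => le_collapse (fun _ _ => mem_union_setOf_of_rel) hw) κ)

theorem diamBounded_CMP (hG : G.Connected) (hα : 0 ≤ α)
    (hκ : ∀ a b : ℝ≥0∞, a ^ α * κ + min a b ^ α + b ^ α * κ ≤ (a + b) ^ α * κ) :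
    DiamBounded G r α κ (CMP G r α) := by
  set S := {t : Setoid V | t ≤ CMP G r α ∧ DiamBounded G r α κ t}
  have hbot : ⊥ ∈ S := ⟨bot_le, fun u v h => by rw [show u = v from h, SimpleGraph.dist_self]; simp⟩
  have hchain : ∀ c ⊆ S, IsChain (· ≤ ·) c → ∀ t ∈ c, ∃ ub ∈ S, ∀ t' ∈ c, t' ≤ ub := by
    intro c hcS hc t ht
    refine ⟨sSup c, ⟨sSup_le fun t' ht' => (hcS ht').1, fun u v huv => ?_⟩, fun _ => le_sSup⟩
    obtain ⟨t', ht', h⟩ := exists_rel_of_sSup_rel hc ⟨t, ht⟩ huv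
    exact ((hcS ht').2 h).trans (mul_le_mul_left (wt_rpow_mono r hα fun _ hw => le_sSup ht' hw) κ)
  obtain ⟨m, -, ⟨hmP, hm⟩, hmax⟩ := zorn_le_nonempty₀ S hchain ⊥ hbot
  suffices hPm : CMP G r α ≤ m from le_antisymm hmP hPm ▸ hm
  refine CMP_le G r (admissible_of_le G r hα (admissible_CMP G r hα) hmP
    fun e e' hPee' hee' => lt_of_not_ge fun hclose => hee' ?_)
  have hU : ∀ z ∈ {w | m w e} ∪ {w | m w e'}, CMP G r α z e := by
    rintro z (hz | hz)
    · exact hmP hz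
    · exact (CMP G r α).trans' (hmP hz) ((CMP G r α).symm' hPee')
  have hcollapse : collapse m ({w | m w e} ∪ {w | m w e'}) ∈ S :=
    ⟨collapse_le hmP fun z hz w hw => (CMP G r α).trans' (hU z hz) ((CMP G r α).symm' (hU w hw)),
      hm.collapse hG hα hκ hee' hclose⟩
  exact hmax hcollapse (le_collapse fun _ _ => mem_union_setOf_of_rel)
    (collapse_rel (Or.inl (m.refl' e)) (Or.inr (m.refl' e')))

end Diameter

section EtaStabiliser

variable {G : SimpleGraph V} {r : V → ℝ≥0} {α η : ℝ}

theorem cluster_mem_classes (x : V) : cluster G r α x ∈ (CMP G r α).classes := by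
  have : cluster G r α x = {w | CMP G r α w x} :=
    Set.ext fun _ => ⟨(CMP G r α).symm', (CMP G r α).symm'⟩
  exact this ▸ (CMP G r α).mem_classes x

theorem mem_cluster_self (x : V) : x ∈ cluster G r α x :=
  (CMP G r α).refl' x

theorem cluster_subset_etaStab (x : V) : cluster G r α x ⊆ etaStab G r α η x :=
  fun _ hy => ⟨_, .refl, hy⟩

theorem mem_etaStab_of_dist_le {x y : V}
    (hy : (G.dist x y : ℝ≥0∞) ≤ ENNReal.ofReal η * wt r (cluster G r α x) ^ α) :
    y ∈ etaStab G r α η x := by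
  by_cases hxy : y ∈ cluster G r α x
  · exact cluster_subset_etaStab x hxy
  refine ⟨cluster G r α y, .single ⟨cluster_mem_classes x, cluster_mem_classes y, ?_, ?_⟩,
    mem_cluster_self y⟩
  · exact fun h => hxy (h ▸ mem_cluster_self y)
  · exact (setDist_le_dist G (mem_cluster_self x) (mem_cluster_self y)).trans hy

theorem EtaDesc.wt_rpow_le (hα : 0 ≤ α) (hη : η ≤ 1) {C C' : Set V}
    (h : EtaDesc G r α η C C') : wt r C' ^ α ≤ ENNReal.ofReal η * wt r C ^ α := by
  obtain ⟨hC, hC', hne, hd⟩ := h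
  have hlt : min (wt r C) (wt r C') ^ α < ENNReal.ofReal η * wt r C ^ α :=
    (admissible_CMP G r hα C hC C' hC' hne).trans_le hd
  rcases le_total (wt r C) (wt r C') with hle | hle
  · rw [min_eq_left hle] at hlt
    exact absurd (hlt.trans_le (mul_le_of_le_one_left' (ENNReal.ofReal_le_one.2 hη)))
      (lt_irrefl _)
  · rw [min_eq_right hle] at hlt
    exact hlt.le

variable {κ c : ℝ≥0∞}

theorem EtaDesc.exists_dist_add_le (hG : G.Connected) (hα : 0 ≤ α) (hη : η ≤ 1)
    (hdiam : DiamBounded G r α κ (CMP G r α)) (hc : ENNReal.ofReal η * (1 + κ + c) ≤ c)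
    {C C' : Set V} (h : EtaDesc G r α η C C') (x : V) {z : V} (hz : z ∈ C') :
    ∃ p ∈ C, (G.dist x z : ℝ≥0∞) + c * wt r C' ^ α ≤ G.dist x p + c * wt r C ^ α := by
  have hw := h.wt_rpow_le hα hη
  obtain ⟨hC, hC', -, hd⟩ := h
  obtain ⟨p, hp, hle⟩ := exists_dist_le_add_setDist_add G hG
    (Setoid.nonempty_of_mem_partition (Setoid.isPartition_classes _) hC)
    (Setoid.nonempty_of_mem_partition (Setoid.isPartition_classes _) hC')
    (fun _ hu _ hv => hdiam.dist_le hC' hu hv) x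
  refine ⟨p, hp, ?_⟩
  calc (G.dist x z : ℝ≥0∞) + c * wt r C' ^ α
      ≤ G.dist x p + ENNReal.ofReal η * wt r C ^ α + ENNReal.ofReal η * wt r C ^ α * κ +
          c * (ENNReal.ofReal η * wt r C ^ α) := by
        gcongr
        exact (hle z hz).trans (by gcongr)
    _ = G.dist x p + ENNReal.ofReal η * (1 + κ + c) * wt r C ^ α := by ring
    _ ≤ G.dist x p + c * wt r C ^ α := by gcongr

theorem dist_add_le_of_reflTransGen (hG : G.Connected) (hα : 0 ≤ α) (hη : η ≤ 1)
    (hdiam : DiamBounded G r α κ (CMP G r α)) (hc : ENNReal.ofReal η * (1 + κ + c) ≤ c)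
    {x : V} {C : Set V} (hC : Relation.ReflTransGen (EtaDesc G r α η) (cluster G r α x) C) :
    ∀ z ∈ C, (G.dist x z : ℝ≥0∞) + c * wt r C ^ α ≤ wt r (cluster G r α x) ^ α * (κ + c) := by
  induction hC with
  | refl =>
    intro z hz
    calc (G.dist x z : ℝ≥0∞) + c * wt r (cluster G r α x) ^ α
        ≤ wt r (cluster G r α x) ^ α * κ + c * wt r (cluster G r α x) ^ α :=
          add_le_add_left (hdiam.dist_le (cluster_mem_classes x) (mem_cluster_self x) hz) _
      _ = _ := by ring
  | tail _ hstep ih =>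
    intro z hz
    obtain ⟨p, hp, hle⟩ := hstep.exists_dist_add_le hG hα hη hdiam hc x hz
    exact hle.trans (ih p hp)

theorem dist_le_of_mem_etaStab (hG : G.Connected) (hα : 0 ≤ α) (hη : η ≤ 1)
    (hdiam : DiamBounded G r α κ (CMP G r α)) (hc : ENNReal.ofReal η * (1 + κ + c) ≤ c)
    {x z : V} (hz : z ∈ etaStab G r α η x) :
    (G.dist x z : ℝ≥0∞) ≤ wt r (cluster G r α x) ^ α * (κ + c) := by
  obtain ⟨C, hC, hzC⟩ := hz
  exact le_self_add.trans (dist_add_le_of_reflTransGen hG hα hη hdiam hc hC z hzC)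

end EtaStabiliser

theorem etaStab_neighbour_dist_bounds_general
    {V : Type*} (G : SimpleGraph V) (hconn : G.Connected)
    (r : V → ℝ≥0) (α : ℝ) (hα : 1 < α)
    (η : ℝ) (hη0 : 0 < η) (hη1 : η < 1)
    (γ : ℝ) (hγ : γ = 1 / (2 ^ α - 2) + η / (1 - η) * (1 + 1 / (2 ^ α - 2)))
    (x y : V) (hxy : setDist G (etaStab G r α η x) {y} = 1) :
    ENNReal.ofReal η * (wt r (cluster G r α x)) ^ α ≤ (G.dist x y : ℝ≥0∞) ∧
    (G.dist x y : ℝ≥0∞) ≤ 1 + ENNReal.ofReal γ * (wt r (cluster G r α x)) ^ α := by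
  have hα0 : 0 ≤ α := by linarith
  constructor
  · by_contra! hlt
    have h0 := setDist_le_dist G (mem_etaStab_of_dist_le hlt.le) (Set.mem_singleton y)
    rw [hxy, SimpleGraph.dist_self] at h0
    exact absurd h0 (by norm_num)
  · have hk : 0 ≤ 1 / ((2 : ℝ) ^ α - 2) := (one_div_pos.2 (two_rpow_sub_two_pos hα)).le
    have hdiam := diamBounded_CMP (r := r) hconn hα0 (rpow_mul_add_min_rpow_le hα)
    have hc := (ofReal_mul_one_add_add_eq hη0.le hη1 hk).le
    obtain ⟨z, hz, b, hb, hzy⟩ := exists_dist_eq_setDist G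
      ⟨x, cluster_subset_etaStab x (mem_cluster_self x)⟩ (Set.singleton_nonempty y)
    rw [Set.mem_singleton_iff.1 hb, hxy] at hzy
    calc (G.dist x y : ℝ≥0∞) ≤ G.dist x z + G.dist z y := dist_le_dist_add_dist G hconn x z y
      _ ≤ wt r (cluster G r α x) ^ α * (ENNReal.ofReal (1 / (2 ^ α - 2)) +
            ENNReal.ofReal (η / (1 - η) * (1 + 1 / (2 ^ α - 2)))) + 1 :=
          add_le_add (dist_le_of_mem_etaStab hconn hα0 hη1.le hdiam hc hz) hzy.le
      _ = 1 + ENNReal.ofReal γ * wt r (cluster G r α x) ^ α := by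
          have hη1' : 0 < 1 - η := by linarith
          rw [hγ, ENNReal.ofReal_add hk (by positivity)]
          ring

/-- Distance bounds for neighbours in the oriented graph `G^η`: if `y` lies on the outer
boundary of the `η`-stabiliser of `x` (i.e. `d(𝒮^η_x, y) = 1`), then
`η·r(𝒞_x)^α ≤ d(x,y) ≤ 1 + γ·r(𝒞_x)^α`, where
`γ = 1/(2^α − 2) + (η/(1−η))·(1 + 1/(2^α − 2))`. -/
theorem etaStab_neighbour_dist_bounds
    {V : Type*} (G : SimpleGraph V) (hconn : G.Connected)
    (hlf : ∀ v : V, (G.neighborSet v).Finite)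
    (r : V → ℝ≥0) (α : ℝ) (hα : 1 < α)
    (η : ℝ) (hη0 : 0 < η) (hη1 : η < 1)
    (γ : ℝ) (hγ : γ = 1 / (2 ^ α - 2) + η / (1 - η) * (1 + 1 / (2 ^ α - 2)))
    (x y : V) (hxy : setDist G (etaStab G r α η x) {y} = 1) :
    ENNReal.ofReal η * (wt r (cluster G r α x)) ^ α ≤ (G.dist x y : ℝ≥0∞) ∧
    (G.dist x y : ℝ≥0∞) ≤ 1 + ENNReal.ofReal γ * (wt r (cluster G r α x)) ^ α :=
  etaStab_neighbour_dist_bounds_general G hconn r α hα η hη0 hη1 γ hγ x y hxy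

end CMPPaper
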